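/- arXiv:2201.01967 — 2 statements merged into one kernel-verified Lean document; each statement's English description precedes it below -/
import Mathlib

section
/- Let p : 𝒳 ⥤ 𝒮 be a functor and let φ : U ⟶ X, ψ : V ⟶ Y, a : X ⟶ Y, b : U ⟶ V be morphisms of 𝒳 with φ ≫ a = b ≫ ψ, where φ and ψ are strongly cartesian. If the image square p.map φ ≫ p.map a = p.map b ≫ p.map ψ is a pullback square in 𝒮, then the square φ ≫ a = b ≫ ψ is a pullback square in 𝒳. -/
open CategoryTheory CategoryTheory.Functor CategoryTheory.Limits

/-!
A cone `(x, y)` over `a` and `ψ` is sent by `p` to a cone over `p.map a` and `p.map ψ`, which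
factors through the pullback in `𝒮`; lifting that factorization along `φ` through `x`
gives the factorization in `𝒳`. Morphisms into the domain of a strongly cartesian morphism are
determined by their image under `p` and their composite with it, which yields both the second
factorization identity (via `ψ`) and uniqueness (via `φ`).
-/

namespace CategoryTheory.Functor.IsStronglyCartesian

variable {𝒮 𝒳 : Type*} [Category 𝒮] [Category 𝒳] (p : 𝒳 ⥤ 𝒮) {U X : 𝒳}
  (φ : U ⟶ X) [p.IsStronglyCartesian (p.map φ) φ]

lemma hom_ext_of_map_eq {W : 𝒳} {m m' : W ⟶ U} (hmap : p.map m = p.map m')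
    (h : m ≫ φ = m' ≫ φ) : m = m' :=
  have : p.IsHomLift (p.map m) m' := hmap ▸ inferInstance
  IsStronglyCartesian.ext p (p.map φ) φ (p.map m) h

lemma exists_lift {W : 𝒳} (g : p.obj W ⟶ p.obj U) (τ : W ⟶ X) (hτ : p.map τ = g ≫ p.map φ) :
    ∃ χ : W ⟶ U, p.map χ = g ∧ χ ≫ φ = τ :=
  ⟨map p (p.map φ) φ hτ τ, (IsHomLift.eq_of_isHomLift p g _).symm, fac p (p.map φ) φ hτ τ⟩

end CategoryTheory.Functor.IsStronglyCartesian

open CategoryTheory.Functor.IsStronglyCartesian in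
/-- A commutative square in `𝒳` with strongly cartesian horizontal sides lying over a
pullback square in `𝒮` is itself a pullback square in `𝒳`. -/
theorem special_square_isPullback {𝒮 : Type*} {𝒳 : Type*} [Category 𝒮] [Category 𝒳]
    (p : 𝒳 ⥤ 𝒮) {U X V Y : 𝒳} (φ : U ⟶ X) (ψ : V ⟶ Y) (a : X ⟶ Y) (b : U ⟶ V)
    [p.IsStronglyCartesian (p.map φ) φ] [p.IsStronglyCartesian (p.map ψ) ψ]
    (hcomm : φ ≫ a = b ≫ ψ)
    (hpb : IsPullback (p.map φ) (p.map b) (p.map a) (p.map ψ)) :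
    IsPullback φ b a ψ := by
  refine IsPullback.mk' hcomm (fun T m m' hφ hb => ?_) (fun T x y hxy => ?_)
  · have hmap : p.map m = p.map m' :=
      hpb.hom_ext (by simp only [← p.map_comp, hφ]) (by simp only [← p.map_comp, hb])
    exact hom_ext_of_map_eq p φ hmap hφ
  · have hbase : p.map x ≫ p.map a = p.map y ≫ p.map ψ := by simp only [← p.map_comp, hxy]
    obtain ⟨χ, hχ, hχφ⟩ := exists_lift p φ (hpb.lift _ _ hbase) x (hpb.lift_fst _ _ _).symm
    refine ⟨χ, hχφ, hom_ext_of_map_eq p ψ ?_ ?_⟩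
    · rw [p.map_comp, hχ, hpb.lift_snd]
    · rw [Category.assoc, ← hcomm, reassoc_of% hχφ, hxy]
end

section
/- Let p : 𝒳 ⥤ 𝒮 be a fibered category over a base category 𝒮 with pullbacks. For every morphism a : X ⟶ Y of 𝒳 and every morphism f : L ⟶ p.obj Y of 𝒮, form the pullback of p.map a along f, with projections f' : K ⟶ p.obj X (top) and g : K ⟶ L (left). Then there exist objects U, V of 𝒳, a strongly cartesian morphism ψ : V ⟶ Y lifting f, a strongly cartesian morphism φ : U ⟶ X lifting f', and a morphism b : U ⟶ V lifting g, such that φ ≫ a = b ≫ ψ and this square is a pullback square in 𝒳. (Existence of the contravariant reindexing f*a of a morphism a along a base morphism f.) -/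
/-!
Choose strongly cartesian lifts `ψ` of `f` and `φ` of the projection `f'` of the pullback; the
universal property of `ψ` then produces the lift `b` of the other projection with
`φ ≫ a = b ≫ ψ`. This square is a pullback in `𝒳`: a cone over `a` and `ψ` maps to a cone over
`p.map a` and `f`, hence to a base morphism into the pullback, which lifts along `φ`; uniqueness
of lifts through `φ` and `ψ`, together with the uniqueness in the base pullback, does the rest.
-/

open CategoryTheory CategoryTheory.Functor CategoryTheory.Limits

namespace CategoryTheory

variable {𝒮 𝒳 : Type*} [Category 𝒮] [Category 𝒳] (p : 𝒳 ⥤ 𝒮)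

namespace IsHomLift

lemma base_eq_of_isHomLift {R S : 𝒮} {a b : 𝒳} {f f' : R ⟶ S} (φ : a ⟶ b) [p.IsHomLift f φ]
    [p.IsHomLift f' φ] : f = f' := by
  rw [fac p f φ, fac p f' φ]

lemma exists_of_codomain_eq {S : 𝒮} {a b : 𝒳} (φ : a ⟶ b) (hb : p.obj b = S) :
    ∃ u : p.obj a ⟶ S, p.IsHomLift u φ := by
  subst hb
  exact ⟨p.map φ, inferInstance⟩

lemma comp_eq_comp_of_comp_eq {T R S L : 𝒮} {u : T ⟶ R} {h : R ⟶ S} {v : T ⟶ L} {f : L ⟶ S}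
    {W X Y V : 𝒳} {x : W ⟶ X} {a : X ⟶ Y} {y : W ⟶ V} {ψ : V ⟶ Y}
    [p.IsHomLift u x] [p.IsHomLift h a] [p.IsHomLift v y] [p.IsHomLift f ψ]
    (w : x ≫ a = y ≫ ψ) : u ≫ h = v ≫ f := by
  have : p.IsHomLift (v ≫ f) (x ≫ a) := w ▸ inferInstance
  exact base_eq_of_isHomLift p (x ≫ a)

end IsHomLift

namespace Functor.IsStronglyCartesian

variable {R S K L : 𝒮} {h : R ⟶ S} {f : L ⟶ S} {f' : K ⟶ R} {g : K ⟶ L}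
  {U V X Y : 𝒳} {φ : U ⟶ X} {b : U ⟶ V} {a : X ⟶ Y} {ψ : V ⟶ Y}

lemma hom_ext_of_isPullback (hsq : IsPullback f' g h f)
    [p.IsStronglyCartesian f' φ] [p.IsHomLift g b] {W : 𝒳} {m₁ m₂ : W ⟶ U}
    (h₁ : m₁ ≫ φ = m₂ ≫ φ) (h₂ : m₁ ≫ b = m₂ ≫ b) : m₁ = m₂ := by
  have hU : p.obj U = K := IsHomLift.domain_eq p g b
  obtain ⟨k₁, _⟩ := IsHomLift.exists_of_codomain_eq p m₁ hU
  obtain ⟨k₂, _⟩ := IsHomLift.exists_of_codomain_eq p m₂ hU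
  have hk : k₁ = k₂ := hsq.hom_ext (IsHomLift.comp_eq_comp_of_comp_eq p h₁)
    (IsHomLift.comp_eq_comp_of_comp_eq p h₂)
  subst hk
  exact IsStronglyCartesian.ext p f' φ k₁ h₁

lemma exists_lift_of_isPullback (hsq : IsPullback f' g h f)
    [p.IsStronglyCartesian f' φ] [p.IsHomLift g b] [p.IsHomLift h a]
    [p.IsStronglyCartesian f ψ] (w : φ ≫ a = b ≫ ψ) {W : 𝒳} {x : W ⟶ X} {y : W ⟶ V}
    (hxy : x ≫ a = y ≫ ψ) : ∃ l : W ⟶ U, l ≫ φ = x ∧ l ≫ b = y := by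
  obtain ⟨u, _⟩ := IsHomLift.exists_of_codomain_eq p x (IsHomLift.domain_eq p h a)
  obtain ⟨v, _⟩ := IsHomLift.exists_of_codomain_eq p y (IsHomLift.domain_eq p f ψ)
  have huv : u ≫ h = v ≫ f := IsHomLift.comp_eq_comp_of_comp_eq p hxy
  let l := IsStronglyCartesian.map p f' φ (hsq.lift_fst u v huv).symm x
  have hlφ : l ≫ φ = x := IsStronglyCartesian.fac p f' φ _ x
  have : p.IsHomLift v (l ≫ b) := hsq.lift_snd u v huv ▸ inferInstance
  refine ⟨l, hlφ, IsStronglyCartesian.ext p f ψ v ?_⟩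
  rw [Category.assoc, ← w, ← Category.assoc, hlφ, hxy]

theorem isPullback (hsq : IsPullback f' g h f)
    [p.IsStronglyCartesian f' φ] [p.IsHomLift g b] [p.IsHomLift h a]
    [p.IsStronglyCartesian f ψ] (w : φ ≫ a = b ≫ ψ) : IsPullback φ b a ψ := by
  have hlift (s : PullbackCone a ψ) := exists_lift_of_isPullback p hsq w s.condition
  refine .of_isLimit (PullbackCone.IsLimit.mk w (fun s => (hlift s).choose)
    (fun s => (hlift s).choose_spec.1) (fun s => (hlift s).choose_spec.2) ?_)
  intro s m hm₁ hm₂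
  exact hom_ext_of_isPullback p hsq (hm₁.trans (hlift s).choose_spec.1.symm)
    (hm₂.trans (hlift s).choose_spec.2.symm)

end Functor.IsStronglyCartesian

end CategoryTheory

/-- Existence of the contravariant reindexing `f*a` of a morphism `a` of a fibered
category along a base morphism `f`: the pullback of `p.map a` along `f` lifts to a
"special" square in `𝒳`, which is moreover a pullback square in `𝒳`. -/
theorem exists_reindexing {𝒮 : Type*} {𝒳 : Type*} [Category 𝒮] [Category 𝒳]
    [HasPullbacks 𝒮] (p : 𝒳 ⥤ 𝒮) [p.IsFibered]
    {X Y : 𝒳} (a : X ⟶ Y) {L : 𝒮} (f : L ⟶ p.obj Y) :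
    ∃ (U V : 𝒳) (ψ : V ⟶ Y) (φ : U ⟶ X) (b : U ⟶ V),
      p.IsStronglyCartesian f ψ ∧
      p.IsStronglyCartesian (pullback.fst (p.map a) f) φ ∧
      p.IsHomLift (pullback.snd (p.map a) f) b ∧
      φ ≫ a = b ≫ ψ ∧ IsPullback φ b a ψ := by
  obtain ⟨V, ψ, _⟩ := IsPreFibered.exists_isCartesian' (p := p) f
  obtain ⟨U, φ, _⟩ := IsPreFibered.exists_isCartesian' (p := p) (pullback.fst (p.map a) f)
  let b : U ⟶ V := IsStronglyCartesian.map p f ψ (pullback.condition (f := p.map a)) (φ ≫ a)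
  have w : φ ≫ a = b ≫ ψ := (IsStronglyCartesian.fac p f ψ _ _).symm
  exact ⟨U, V, ψ, φ, b, inferInstance, inferInstance, inferInstance, w,
    IsStronglyCartesian.isPullback p (IsPullback.of_hasPullback (p.map a) f) w⟩
end
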